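/- arXiv:2410.22563 — 3 statements merged into one kernel-verified Lean document; each statement's English description precedes it below -/
import Mathlib

section
/- Suppose Assumption (A) holds together with r(n−1) < (3/7)(1 − 1/α), r(n−1) < (3/7)(1 − 1/β), and r(n−1) < (1/10)(1/α + 1/β − 1). Then the cone Ψ is contracting-invariant and expanding for the pair of matrices {A_L, A_R}. -/
open Matrix Polynomial Finset

noncomputable section

/-- The companion-type matrix of the `n`-dimensional border-collision normal form:
`(i,1)` entry is `-a i`, `(i,i+1)` entries are `1`, all other entries `0`. -/
def bcMat (n : ℕ) (a : Fin n → ℝ) : Matrix (Fin n) (Fin n) ℝ :=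
  Matrix.of fun i j =>
    (if (j : ℕ) = 0 then -a i else 0) + (if (j : ℕ) = (i : ℕ) + 1 then 1 else 0)

/-- The vector `b = (1,0,…,0)`. -/
def bcVec (n : ℕ) : Fin n → ℝ := fun i => if (i : ℕ) = 0 then 1 else 0

/-- `ρ` is an eigenvalue of `M` (of algebraic multiplicity one, automatic when `|ρ| > r`)
and all remaining eigenvalues of `M` over `ℂ`, counted with multiplicity,
have modulus at most `r`. -/
def specA (n : ℕ) (M : Matrix (Fin n) (Fin n) ℝ) (ρ r : ℝ) : Prop :=
  ∃ lam : Fin (n - 1) → ℂ,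
    (∀ j, ‖lam j‖ ≤ r) ∧
      M.charpoly.map (algebraMap ℝ ℂ) =
        (X - C (ρ : ℂ)) * ∏ j : Fin (n - 1), (X - C (lam j))

/-- Assumption (A). -/
def assumptionA (n : ℕ) (aL aR : Fin n → ℝ) (α β r : ℝ) : Prop :=
  1 < α ∧ 1 < β ∧ 0 < r ∧ r < 1 ∧
    specA n (bcMat n aL) α r ∧ specA n (bcMat n aR) (-β) r

/-- The border-collision normal form map `f`. -/
def bcf (n : ℕ) (aL aR : Fin n → ℝ) (x : Fin n → ℝ) : Fin n → ℝ :=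
  if ∀ i : Fin n, (i : ℕ) = 0 → x i ≤ 0 then (bcMat n aL).mulVec x + bcVec n
  else (bcMat n aR).mulVec x + bcVec n

/-- The fixed point `Y = (I − A_L)⁻¹ b`. -/
def Ypt (n : ℕ) (aL : Fin n → ℝ) : Fin n → ℝ :=
  ((1 - bcMat n aL)⁻¹).mulVec (bcVec n)

/-- The row vector `u = (α^{n-1}, …, α, 1)`. -/
def uvec (n : ℕ) (α : ℝ) : Fin n → ℝ := fun i => α ^ (n - 1 - (i : ℕ))

/-- The hyperplane `E = {x : uᵀ(x − Y) = 0}`. -/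
def Eset (n : ℕ) (aL : Fin n → ℝ) (α : ℝ) : Set (Fin n → ℝ) :=
  {x | ∑ i : Fin n, uvec n α i * (x i - Ypt n aL i) = 0}

/-- The slab `H = {x : |x_i| ≤ M_i r^{i-1}, i = 2,…,n}` with
`M_i = (2α/(α−1))·binom(n−1,i−1)`. -/
def Hset (n : ℕ) (α r : ℝ) : Set (Fin n → ℝ) :=
  {x | ∀ i : Fin n, 1 ≤ (i : ℕ) →
    |x i| ≤ 2 * α / (α - 1) * ((n - 1).choose (i : ℕ) : ℝ) * r ^ (i : ℕ)}

/-- The first component `C₁` of the point `C`. -/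
def Cfirst (n : ℕ) (aL aR : Fin n → ℝ) (α : ℝ) : ℝ :=
  (1 - 1 / (1 - bcMat n aL).det +
      1 / (1 - bcMat n aL).det *
        ∑ k ∈ univ.filter (fun k : Fin n => 1 ≤ (k : ℕ)),
          α ^ (-((k : ℕ) : ℤ)) *
            ∑ j ∈ univ.filter (fun j : Fin n => (k : ℕ) ≤ (j : ℕ)), aL j) /
    ∑ i : Fin n, α ^ (-((i : ℕ) : ℤ)) * aR i

/-- The point `C = (C₁, 0, …, 0)`. -/
def Cpt (n : ℕ) (aL aR : Fin n → ℝ) (α : ℝ) : Fin n → ℝ :=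
  fun i => if (i : ℕ) = 0 then Cfirst n aL aR α else 0

/-- The polytope `Ω = Conv({C} ∪ (E ∩ H))`. -/
def OmegaSet (n : ℕ) (aL aR : Fin n → ℝ) (α r : ℝ) : Set (Fin n → ℝ) :=
  convexHull ℝ ({Cpt n aL aR α} ∪ (Eset n aL α ∩ Hset n α r))

/-- The cone `Ψ` of scalar multiples of vectors `(1, m₁, …, m_{n-1})` with
`|m_i| ≤ N_i r^{i-1}`, `N_i = ((min(α,β)−1)/2)·binom(n−1,i−1)`. -/
def PsiSet (n : ℕ) (α β r : ℝ) : Set (Fin n → ℝ) :=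
  {x | ∃ γ : ℝ, ∃ v : Fin n → ℝ,
    (∀ i : Fin n, (i : ℕ) = 0 → v i = 1) ∧
    (∀ i : Fin n, 1 ≤ (i : ℕ) →
      |v i| ≤ (min α β - 1) / 2 * ((n - 1).choose ((i : ℕ) - 1) : ℝ) * r ^ ((i : ℕ) - 1)) ∧
    x = γ • v}

/-- `P` is the vertex `P^(s)`: the point of `E` whose `i`-th component, `i = 2,…,n`,
is `s_{i-1}·M_i r^{i-1}`. -/
def isVertexP (n : ℕ) (aL : Fin n → ℝ) (α r : ℝ) (s : Fin (n - 1) → ℝ)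
    (P : Fin n → ℝ) : Prop :=
  P ∈ Eset n aL α ∧
    ∀ i : Fin n, ∀ _h : 1 ≤ (i : ℕ),
      P i = s ⟨(i : ℕ) - 1, by have := i.isLt; omega⟩ *
        (2 * α / (α - 1) * ((n - 1).choose (i : ℕ) : ℝ) * r ^ (i : ℕ))

/-- The `k`-th elementary symmetric polynomial of `η`. -/
def esym {m : ℕ} (η : Fin m → ℂ) (k : ℕ) : ℂ :=
  ∑ t ∈ powersetCard k univ, ∏ j ∈ t, η j

end

/-!
Expanding the characteristic polynomial of `A = bcMat n a` along its last row gives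
`X ^ n + ∑ aᵢ X ^ (n - 1 - i)`. Comparing coefficients with `(X - ρ) ∏ (X - λⱼ)`, `|λⱼ| ≤ r`,
gives `|a₀| ≥ |ρ| - (n - 1) r` and `|aⱼ| ≤ |ρ| C(n-1, j) rʲ + C(n-1, j+1) rʲ⁺¹`.

For `v = (1, m₁, …, mₙ₋₁) ∈ Ψ` and `|ρ| = α` or `β` we have `(Av)₀ = -a₀ + m₁`, of size at least
`|ρ| - s - (μ - 1)/2` where `μ = min α β` and `s = (n - 1) r`, while `(Av)ᵢ = -aᵢ + mᵢ₊₁` is at most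
`|ρ| s + s² + (μ - 1) s / 2` times the `i`-th weight `C(n-1, i-1) rⁱ⁻¹`, because consecutive weights
grow by a factor of at most `s`. When `7 μ s < 3 (μ - 1)` this factor is strictly less than
`(μ - 1)/2 · |(Av)₀|`, so `Av` lies in the interior of `Ψ`. For expansion,
the weights are at most `sʲ`, so `‖v‖² ≤ 1 + (μ - 1)² / (4 (1 - s²))`, whereas
`‖Av‖ ≥ |(Av)₀| ≥ 1 + (μ - 1)/2 - s`. The bound `μ < 2` makes the ratio exceed `1`.
-/

theorem charmatrix_bcMat_last_apply (N : ℕ) (a : Fin (N + 2) → ℝ) (j : Fin (N + 2)) :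
    charmatrix (bcMat (N + 2) a) (Fin.last _) j =
      (if j = 0 then C (a (Fin.last _)) else 0) + if j = Fin.last _ then X else 0 := by
  by_cases hj : j = Fin.last _
  · subst hj; simp [bcMat]
  rw [charmatrix_apply_ne _ _ _ (Ne.symm hj)]
  have : (j : ℕ) ≠ N + 2 := by omega
  by_cases h0 : j = 0
  · subst h0; simp [bcMat]
  · simp [bcMat, hj, h0, Fin.val_eq_zero_iff, this]

theorem charmatrix_bcMat_submatrix_castSucc (N : ℕ) (a : Fin (N + 2) → ℝ) :
    (charmatrix (bcMat (N + 2) a)).submatrix Fin.castSucc Fin.castSucc =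
      charmatrix (bcMat (N + 1) (a ∘ Fin.castSucc)) := by
  ext i j
  by_cases h : i = j
  · subst h; simp [bcMat]
  · simp [bcMat, h]

theorem det_charmatrix_bcMat_submatrix_castSucc_succ (N : ℕ) (a : Fin (N + 2) → ℝ) :
    ((charmatrix (bcMat (N + 2) a)).submatrix Fin.castSucc Fin.succ).det = (-1) ^ (N + 1) := by
  have hoff : ∀ i j : Fin (N + 1), i ≤ j → Fin.castSucc i ≠ Fin.succ j := fun i j h h' => by
    rw [Fin.ext_iff] at h'; simp at h'; omega
  rw [det_of_isLowerTriangular]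
  · simp [hoff _ _ le_rfl, bcMat]
  · intro i j hij
    have h : (j : ℕ) ≠ i := by have : (i : ℕ) < j := hij; omega
    simp [hoff i j (le_of_lt hij), bcMat, h]

theorem charpoly_bcMat (N : ℕ) (a : Fin (N + 1) → ℝ) :
    (bcMat (N + 1) a).charpoly = X ^ (N + 1) + ∑ i : Fin (N + 1), C (a i) * X ^ (N - i) := by
  induction N with
  | zero => simp [charpoly, bcMat, sub_eq_add_neg]
  | succ N ih =>
    have h0 : (0 : Fin (N + 2)) ≠ Fin.last _ := by simp [Fin.ext_iff]
    have hsum : ∑ i : Fin (N + 2), C (a i) * X ^ (N + 1 - i) =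
        X * ∑ i : Fin (N + 1), C (a i.castSucc) * X ^ (N - i) + C (a (Fin.last _)) := by
      rw [Fin.sum_univ_castSucc, mul_sum]
      congr 1
      · refine sum_congr rfl fun i _ => ?_
        rw [Fin.val_castSucc, Nat.sub_add_comm (Nat.le_of_lt_succ i.2), pow_succ]
        ring
      · simp
    have hsign : ((-1) ^ (N + 1) * (-1) ^ (N + 1) : ℝ[X]) = 1 := by
      rw [← mul_pow, neg_one_mul, neg_neg, one_pow]
    rw [charpoly, det_succ_row _ (Fin.last _), Fintype.sum_eq_add 0 (Fin.last _) h0]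
    · rw [Fin.succAbove_last, Fin.succAbove_zero, charmatrix_bcMat_submatrix_castSucc,
        det_charmatrix_bcMat_submatrix_castSucc_succ, ← charpoly, ih,
        charmatrix_bcMat_last_apply, charmatrix_bcMat_last_apply]
      simp [h0, h0.symm, hsum]
      linear_combination C (a (Fin.last _)) * hsign
    · intro j ⟨hj0, hjl⟩
      simp [charmatrix_bcMat_last_apply, hj0, hjl]

theorem coeff_charpoly_bcMat (N : ℕ) (a : Fin (N + 1) → ℝ) (j : Fin (N + 1)) :
    (bcMat (N + 1) a).charpoly.coeff (N - j) = a j := by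
  have hj : N - (j : ℕ) ≠ N + 1 := by omega
  rw [charpoly_bcMat, coeff_add, coeff_X_pow, if_neg hj, zero_add, finsetSum_coeff,
    sum_eq_single j]
  · simp
  · intro i _ hij
    rw [coeff_C_mul_X_pow, if_neg]
    exact fun h => hij (Fin.ext (by omega))
  · simp

section RootBounds

variable {K ι : Type*} [NormedField K] (s : Finset ι) (lam : ι → K) {r : ℝ}

theorem norm_coeff_prod_X_sub_C_le (hlam : ∀ i ∈ s, ‖lam i‖ ≤ r) {k : ℕ}
    (hk : k ≤ #s) :
    ‖(∏ i ∈ s, (X - C (lam i))).coeff (#s - k)‖ ≤ (#s).choose k * r ^ k := by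
  simp_rw [sub_eq_add_neg, ← C_neg]
  rw [prod_X_add_C_coeff _ _ (Nat.sub_le _ _), Nat.sub_sub_self hk]
  calc ‖∑ t ∈ s.powersetCard k, ∏ i ∈ t, -lam i‖
      ≤ ∑ t ∈ s.powersetCard k, ‖∏ i ∈ t, -lam i‖ := norm_sum_le _ _
    _ ≤ ∑ t ∈ s.powersetCard k, r ^ k := by
      refine sum_le_sum fun t ht => ?_
      obtain ⟨hts, rfl⟩ := mem_powersetCard.1 ht
      rw [norm_prod, ← prod_const]
      exact prod_le_prod (fun _ _ => norm_nonneg _)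
        fun i hi => (norm_neg (lam i)).le.trans (hlam i (hts hi))
    _ = (#s).choose k * r ^ k := by simp

theorem coeff_prod_X_sub_C_card : (∏ i ∈ s, (X - C (lam i))).coeff #s = 1 := by
  simp_rw [sub_eq_add_neg, ← C_neg]
  rw [prod_X_add_C_coeff _ _ le_rfl]
  simp

theorem norm_coeff_X_mul_prod_X_sub_C_le (hlam : ∀ i ∈ s, ‖lam i‖ ≤ r) {k : ℕ}
    (hk : k ≤ #s) :
    ‖(X * ∏ i ∈ s, (X - C (lam i))).coeff (#s - k)‖ ≤ (#s).choose (k + 1) * r ^ (k + 1) := by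
  rcases hk.eq_or_lt with rfl | hk
  · simp
  · rw [show #s - k = #s - (k + 1) + 1 by omega, coeff_X_mul]
    exact norm_coeff_prod_X_sub_C_le s lam hlam hk

end RootBounds

def binomWeight (N : ℕ) (r : ℝ) (k : ℕ) : ℝ := N.choose k * r ^ k

section BinomWeight

variable {N : ℕ} {r : ℝ}

theorem binomWeight_zero : binomWeight N r 0 = 1 := by simp [binomWeight]

theorem binomWeight_nonneg (hr : 0 ≤ r) (k : ℕ) : 0 ≤ binomWeight N r k := by
  unfold binomWeight; positivity

theorem binomWeight_pos (hr : 0 < r) {k : ℕ} (hk : k ≤ N) : 0 < binomWeight N r k :=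
  mul_pos (by exact_mod_cast Nat.choose_pos hk) (pow_pos hr k)

theorem binomWeight_succ_le (hr : 0 ≤ r) (k : ℕ) :
    binomWeight N r (k + 1) ≤ N * r * binomWeight N r k := by
  have hchoose : N.choose (k + 1) ≤ N.choose k * N :=
    calc N.choose (k + 1) ≤ N.choose (k + 1) * (k + 1) := Nat.le_mul_of_pos_right _ k.succ_pos
      _ = N.choose k * (N - k) := Nat.choose_succ_right_eq N k
      _ ≤ N.choose k * N := Nat.mul_le_mul_left _ (Nat.sub_le N k)
  have : (N.choose (k + 1) : ℝ) ≤ N.choose k * N := by exact_mod_cast hchoose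
  calc binomWeight N r (k + 1) ≤ N.choose k * N * r ^ (k + 1) :=
        mul_le_mul_of_nonneg_right this (pow_nonneg hr _)
    _ = N * r * binomWeight N r k := by rw [binomWeight, pow_succ]; ring

theorem binomWeight_le_pow (hr : 0 ≤ r) (k : ℕ) : binomWeight N r k ≤ (N * r) ^ k := by
  rw [binomWeight, mul_pow]
  gcongr
  exact_mod_cast Nat.choose_le_pow N k

end BinomWeight

theorem abs_coeff_bounds_of_specA {N : ℕ} {a : Fin (N + 1) → ℝ} {ρ r : ℝ}
    (h : specA (N + 1) (bcMat (N + 1) a) ρ r) :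
    |ρ| - N * r ≤ |a 0| ∧ ∀ j, |a j| ≤ |ρ| * binomWeight N r j + binomWeight N r (j + 1) := by
  obtain ⟨lam, hlam, hfac⟩ := h
  set Q := ∏ i, (X - C (lam i))
  have hlam' : ∀ i ∈ univ, ‖lam i‖ ≤ r := fun i _ => hlam i
  have hcard : #(univ : Finset (Fin (N + 1 - 1))) = N := by simp
  have hQ : ∀ k ≤ N, ‖Q.coeff (N - k)‖ ≤ binomWeight N r k := fun k hk => by
    have := norm_coeff_prod_X_sub_C_le univ lam hlam' (k := k) (by rwa [hcard])
    rwa [hcard] at this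
  have hXQ : ∀ k ≤ N, ‖(X * Q).coeff (N - k)‖ ≤ binomWeight N r (k + 1) := fun k hk => by
    have := norm_coeff_X_mul_prod_X_sub_C_le univ lam hlam' (k := k) (by rwa [hcard])
    rwa [hcard] at this
  have hQtop : Q.coeff N = 1 := by
    have := coeff_prod_X_sub_C_card univ lam
    rwa [hcard] at this
  have ha : ∀ j : Fin (N + 1), (a j : ℂ) = (X * Q).coeff (N - j) - ρ * Q.coeff (N - j) := by
    intro j
    have := congrArg (coeff · (N - j)) hfac
    simpa [coeff_charpoly_bcMat, sub_mul, coeff_C_mul] using this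
  have habs : ∀ x : ℝ, |x| = ‖(x : ℂ)‖ := fun x => by simp
  refine ⟨?_, fun j => ?_⟩
  · have h0 := ha 0
    rw [Fin.val_zero, Nat.sub_zero, hQtop, mul_one] at h0
    have hN := hXQ 0 (Nat.zero_le _)
    simp only [Nat.sub_zero, binomWeight, Nat.choose_one_right, zero_add, pow_one] at hN
    have := norm_sub_norm_le (ρ : ℂ) ((X * Q).coeff N)
    rw [habs, habs, h0, norm_sub_rev]
    linarith
  · have hj : (j : ℕ) ≤ N := Nat.le_of_lt_succ j.2
    rw [habs, habs, ha j]
    calc _ ≤ ‖(X * Q).coeff (N - j)‖ + ‖(ρ : ℂ)‖ * ‖Q.coeff (N - j)‖ :=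
          (norm_sub_le _ _).trans_eq (by rw [norm_mul])
      _ ≤ _ := by linarith [hXQ j hj, mul_le_mul_of_nonneg_left (hQ j hj) (norm_nonneg (ρ : ℂ))]

theorem bcMat_mulVec_castSucc {N : ℕ} (a x : Fin (N + 1) → ℝ) (k : Fin N) :
    (bcMat (N + 1) a *ᵥ x) k.castSucc = -a k.castSucc * x 0 + x k.succ := by
  have hsucc : ∀ j : Fin (N + 1), (j : ℕ) = k + 1 ↔ k.succ = j := by
    simp [Fin.ext_iff, eq_comm]
  simp [mulVec, dotProduct, bcMat, add_mul, sum_add_distrib, Fin.val_eq_zero_iff, hsucc]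

theorem bcMat_mulVec_last {N : ℕ} (a x : Fin (N + 1) → ℝ) :
    (bcMat (N + 1) a *ᵥ x) (Fin.last N) = -a (Fin.last N) * x 0 := by
  have hlt : ∀ j : Fin (N + 1), (j : ℕ) ≠ N + 1 := fun j => j.2.ne
  simp [mulVec, dotProduct, bcMat, Fin.val_eq_zero_iff, hlt]

section PsiCone

variable {N : ℕ} {α β r : ℝ}

theorem abs_succ_le_of_mem_PsiSet {x : Fin (N + 1) → ℝ} (hx : x ∈ PsiSet (N + 1) α β r)
    (j : Fin N) : |x j.succ| ≤ (min α β - 1) / 2 * binomWeight N r j * |x 0| := by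
  obtain ⟨γ, v, hv0, hv, rfl⟩ := hx
  have h := hv j.succ (by simp)
  simp only [Fin.val_succ, Nat.add_sub_cancel] at h
  simp only [Pi.smul_apply, smul_eq_mul, abs_mul, hv0 0 rfl, mul_one, binomWeight]
  rw [mul_comm]
  exact mul_le_mul_of_nonneg_right (by simpa [mul_assoc] using h) (abs_nonneg γ)

theorem mem_interior_PsiSet (hN : 0 < N) {y : Fin (N + 1) → ℝ}
    (hy : ∀ j : Fin N, |y j.succ| < (min α β - 1) / 2 * binomWeight N r j * |y 0|) :
    y ∈ interior (PsiSet (N + 1) α β r) := by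
  set S := {y : Fin (N + 1) → ℝ |
    ∀ j : Fin N, |y j.succ| < (min α β - 1) / 2 * binomWeight N r j * |y 0|}
  have hopen : IsOpen S := by
    simp only [S, Set.ofPred_forall]
    exact isOpen_iInter_of_finite fun j =>
      isOpen_lt (continuous_apply _).abs (continuous_const.mul (continuous_apply _).abs)
  refine interior_maximal (fun z hz => ?_) hopen hy
  have hz0 : z 0 ≠ 0 := by
    intro h0
    have := hz ⟨0, hN⟩
    rw [h0, abs_zero, mul_zero] at this
    exact (abs_nonneg _).not_gt this
  refine ⟨z 0, (z 0)⁻¹ • z, fun i hi => ?_, fun i hi => ?_, (smul_inv_smul₀ hz0 z).symm⟩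
  · rw [show i = 0 from Fin.ext hi]
    simp [hz0]
  · obtain ⟨j, rfl⟩ := Fin.exists_succ_eq.2 (Fin.pos_iff_ne_zero.1 hi)
    have hz0' : 0 < |z 0| := abs_pos.2 hz0
    simp only [Pi.smul_apply, smul_eq_mul, abs_mul, abs_inv, Fin.val_succ, Nat.add_sub_cancel]
    rw [inv_mul_le_iff₀ hz0', mul_comm]
    simpa [binomWeight, mul_assoc] using (hz j).le

end PsiCone

theorem min_lt_two_of_one_lt_inv_add_inv {α β : ℝ} (h : 1 < 1 / α + 1 / β) : min α β < 2 := by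
  by_contra! h2
  have := one_div_le_one_div_of_le two_pos (h2.trans (min_le_left α β))
  have := one_div_le_one_div_of_le two_pos (h2.trans (min_le_right α β))
  linarith

theorem seven_mul_min_mul_lt {α β s : ℝ} (hα : 1 < α) (hβ : 1 < β)
    (h1 : s < 3 / 7 * (1 - 1 / α)) (h2 : s < 3 / 7 * (1 - 1 / β)) :
    7 * min α β * s < 3 * (min α β - 1) := by
  have h : s < 3 / 7 * (1 - 1 / min α β) := by
    rcases min_choice α β with h | h <;> rw [h] <;> assumption
  have hμ : 0 < min α β := lt_min (by linarith) (by linarith)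
  rw [show 3 / 7 * (1 - 1 / min α β) = 3 * (min α β - 1) / (7 * min α β) by field_simp,
    lt_div_iff₀ (by positivity)] at h
  linarith

theorem cone_invariance_margin {μ ρ s : ℝ} (hμ : 1 < μ) (hρ : μ ≤ ρ) (hs : 0 ≤ s)
    (h : 7 * μ * s < 3 * (μ - 1)) :
    ρ * s + s ^ 2 + (μ - 1) / 2 * s < (μ - 1) / 2 * (ρ - s - (μ - 1) / 2) := by
  obtain ⟨m, hm, rfl⟩ : ∃ m, 0 < m ∧ μ = 1 + m := ⟨μ - 1, by linarith, by ring⟩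
  -- the margin increases with `ρ` since `s < m / 2`, so the case `ρ = 1 + m` suffices
  have hsm : s < m / 2 := by nlinarith
  have hmargin : (1 + m) * s + s ^ 2 + m / 2 * s < m / 2 * ((1 + m) - s - m / 2) := by
    nlinarith [mul_le_mul_of_nonneg_left h.le hs, mul_le_mul_of_nonneg_left h.le hm.le,
      mul_le_mul_of_nonneg_left h.le (mul_nonneg hm.le hs), mul_nonneg hm.le hs,
      sq_nonneg (m - 4 * s), mul_nonneg (mul_nonneg hm.le hs) hs,
      mul_nonneg (mul_nonneg hm.le hm.le) hs]
  simp only [add_sub_cancel_left]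
  nlinarith [mul_nonneg (sub_nonneg.2 hρ) (sub_nonneg.2 hsm.le)]

noncomputable def psiExpansion (μ s : ℝ) : ℝ :=
  (1 + (μ - 1) / 2 - s) / Real.sqrt (1 + (μ - 1) ^ 2 / (4 * (1 - s ^ 2)))

theorem one_lt_psiExpansion {μ s : ℝ} (hμ : 1 < μ) (hμ2 : μ < 2) (hs : 0 ≤ s)
    (h : 7 * μ * s < 3 * (μ - 1)) : 1 < psiExpansion μ s := by
  have hs1 : s < 1 / 2 := by nlinarith
  have hd : 0 < 4 * (1 - s ^ 2) := by nlinarith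
  have hlt : 1 + (μ - 1) ^ 2 / (4 * (1 - s ^ 2)) < (1 + (μ - 1) / 2 - s) ^ 2 := by
    suffices (μ - 1) ^ 2 / (4 * (1 - s ^ 2)) < (1 + (μ - 1) / 2 - s) ^ 2 - 1 by linarith
    rw [div_lt_iff₀ hd]
    nlinarith [mul_nonneg hs (sub_nonneg.2 hμ.le), mul_nonneg hs hs,
      mul_nonneg (mul_nonneg hs hs) hs]
  rw [psiExpansion, one_lt_div (Real.sqrt_pos.2 (by positivity))]
  exact (Real.sqrt_lt' (by linarith)).2 hlt

section ConeMap

variable {N : ℕ} {a : Fin (N + 1) → ℝ} {α β r ρ : ℝ} {x : Fin (N + 1) → ℝ}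

theorem abs_bcMat_mulVec_add_le (hμ : 1 ≤ min α β) (hr : 0 ≤ r)
    (hx : x ∈ PsiSet (N + 1) α β r) (i : Fin (N + 1)) :
    |(bcMat (N + 1) a *ᵥ x) i + a i * x 0| ≤ (min α β - 1) / 2 * binomWeight N r i * |x 0| := by
  induction i using Fin.lastCases with
  | last =>
    rw [bcMat_mulVec_last, neg_mul, neg_add_cancel, abs_zero]
    have := binomWeight_nonneg hr (N := N) N
    have : 0 ≤ min α β - 1 := by linarith
    positivity
  | cast k =>
    rw [bcMat_mulVec_castSucc, neg_mul, neg_add_cancel_comm]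
    exact abs_succ_le_of_mem_PsiSet hx k

theorem abs_bcMat_mulVec_zero_ge (hμ : 1 ≤ min α β) (hr : 0 ≤ r)
    (ha0 : ρ - N * r ≤ |a 0|) (hx : x ∈ PsiSet (N + 1) α β r) :
    (ρ - N * r - (min α β - 1) / 2) * |x 0| ≤ |(bcMat (N + 1) a *ᵥ x) 0| := by
  have h := abs_bcMat_mulVec_add_le (a := a) hμ hr hx 0
  rw [Fin.val_zero, binomWeight_zero, mul_one] at h
  have := abs_sub_abs_le_abs_sub (a 0 * x 0) (-(bcMat (N + 1) a *ᵥ x) 0)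
  rw [abs_neg, sub_neg_eq_add, add_comm (a 0 * x 0), abs_mul] at this
  nlinarith [abs_nonneg (x 0)]

theorem abs_bcMat_mulVec_succ_le (hμ : 1 ≤ min α β) (hr : 0 ≤ r) (hρ : 0 ≤ ρ)
    (ha : ∀ j, |a j| ≤ ρ * binomWeight N r j + binomWeight N r (j + 1))
    (hx : x ∈ PsiSet (N + 1) α β r) (j : Fin N) :
    |(bcMat (N + 1) a *ᵥ x) j.succ| ≤
      (ρ * (N * r) + (N * r) ^ 2 + (min α β - 1) / 2 * (N * r)) * binomWeight N r j * |x 0| := by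
  set y := bcMat (N + 1) a *ᵥ x
  have hy := abs_bcMat_mulVec_add_le (a := a) hμ hr hx j.succ
  have haj := ha j.succ
  simp only [Fin.val_succ] at hy haj
  set B := binomWeight N r
  have h1 : B (j + 1) ≤ N * r * B j := binomWeight_succ_le hr j
  have h2 : B (j + 1 + 1) ≤ N * r * B (j + 1) := binomWeight_succ_le hr (j + 1)
  have hs : 0 ≤ N * r := by positivity
  have hm : 0 ≤ (min α β - 1) / 2 := by linarith
  calc |y j.succ| = |(y j.succ + a j.succ * x 0) - a j.succ * x 0| := by ring_nf
    _ ≤ |y j.succ + a j.succ * x 0| + |a j.succ| * |x 0| := by rw [← abs_mul]; exact abs_sub _ _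
    _ ≤ (ρ * B (j + 1) + B (j + 1 + 1) + (min α β - 1) / 2 * B (j + 1)) * |x 0| := by
        nlinarith [abs_nonneg (x 0)]
    _ ≤ _ := by
        gcongr
        nlinarith [mul_le_mul_of_nonneg_left h1 hρ, mul_le_mul_of_nonneg_left h1 hm,
          mul_le_mul_of_nonneg_left h1 hs]

theorem eq_zero_of_mem_PsiSet_of_apply_zero (hx : x ∈ PsiSet (N + 1) α β r) (hx0 : x 0 = 0) :
    x = 0 := by
  funext i
  induction i using Fin.cases with
  | zero => exact hx0
  | succ j => simpa [hx0] using abs_succ_le_of_mem_PsiSet hx j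

theorem bcMat_mulVec_mem_interior_PsiSet_union_zero (hN : 0 < N) (hμ : 1 < min α β) (hr : 0 < r)
    (hρ : min α β ≤ ρ) (hs : 7 * min α β * (N * r) < 3 * (min α β - 1))
    (ha0 : ρ - N * r ≤ |a 0|) (ha : ∀ j, |a j| ≤ ρ * binomWeight N r j + binomWeight N r (j + 1))
    (hx : x ∈ PsiSet (N + 1) α β r) :
    bcMat (N + 1) a *ᵥ x ∈ interior (PsiSet (N + 1) α β r) ∪ {0} := by
  by_cases hx0 : x 0 = 0
  · right
    simp [eq_zero_of_mem_PsiSet_of_apply_zero hx hx0]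
  left
  refine mem_interior_PsiSet hN fun j => ?_
  have hmargin := cone_invariance_margin hμ hρ (by positivity) hs
  have hB : 0 < binomWeight N r j := binomWeight_pos hr j.is_lt.le
  have hx0' : 0 < |x 0| := abs_pos.2 hx0
  have hm : 0 ≤ (min α β - 1) / 2 := by linarith
  calc |(bcMat (N + 1) a *ᵥ x) j.succ|
      ≤ (ρ * (N * r) + (N * r) ^ 2 + (min α β - 1) / 2 * (N * r)) * binomWeight N r j * |x 0| :=
        abs_bcMat_mulVec_succ_le hμ.le hr.le (by linarith) ha hx j
    _ < (min α β - 1) / 2 * (ρ - N * r - (min α β - 1) / 2) * binomWeight N r j * |x 0| := by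
        gcongr
    _ = (min α β - 1) / 2 * binomWeight N r j * ((ρ - N * r - (min α β - 1) / 2) * |x 0|) := by
        ring
    _ ≤ (min α β - 1) / 2 * binomWeight N r j * |(bcMat (N + 1) a *ᵥ x) 0| := by
        gcongr
        exact abs_bcMat_mulVec_zero_ge hμ.le hr.le ha0 hx

theorem sum_sq_le_of_mem_PsiSet (hμ : 1 ≤ min α β) (hr : 0 ≤ r) (hs : N * r < 1)
    (hx : x ∈ PsiSet (N + 1) α β r) :
    ∑ i, x i ^ 2 ≤ (1 + (min α β - 1) ^ 2 / (4 * (1 - (N * r) ^ 2))) * x 0 ^ 2 := by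
  have hs0 : 0 ≤ N * r := by positivity
  have hs2 : (N * r) ^ 2 < 1 := by nlinarith
  have hm : 0 ≤ (min α β - 1) / 2 := by linarith
  have hterm : ∀ j : Fin N,
      x j.succ ^ 2 ≤ ((min α β - 1) / 2) ^ 2 * x 0 ^ 2 * ((N * r) ^ 2) ^ (j : ℕ) := by
    intro j
    have h : |x j.succ| ≤ (min α β - 1) / 2 * (N * r) ^ (j : ℕ) * |x 0| :=
      (abs_succ_le_of_mem_PsiSet hx j).trans (by gcongr; exact binomWeight_le_pow hr j)
    calc x j.succ ^ 2 = |x j.succ| ^ 2 := (sq_abs _).symm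
      _ ≤ ((min α β - 1) / 2 * (N * r) ^ (j : ℕ) * |x 0|) ^ 2 := by gcongr
      _ = _ := by rw [mul_pow, mul_pow, sq_abs, ← pow_mul, ← pow_mul, mul_comm (j : ℕ) 2]; ring
  have hgeom : ∑ j : Fin N, ((N * r) ^ 2) ^ (j : ℕ) ≤ 1 / (1 - (N * r) ^ 2) := by
    rw [Fin.sum_univ_eq_sum_range (fun j => ((N * r) ^ 2) ^ j), range_eq_Ico]
    simpa using geom_sum_Ico_le_of_lt_one (sq_nonneg _) hs2 (m := 0) (n := N)
  rw [Fin.sum_univ_succ]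
  calc x 0 ^ 2 + ∑ j : Fin N, x j.succ ^ 2
      ≤ x 0 ^ 2 + ((min α β - 1) / 2) ^ 2 * x 0 ^ 2 * (1 / (1 - (N * r) ^ 2)) := by
        gcongr
        calc ∑ j : Fin N, x j.succ ^ 2
            ≤ ∑ j : Fin N, ((min α β - 1) / 2) ^ 2 * x 0 ^ 2 * ((N * r) ^ 2) ^ (j : ℕ) :=
              sum_le_sum fun j _ => hterm j
          _ ≤ _ := by rw [← mul_sum]; gcongr
    _ = _ := by field_simp; ring

theorem psiExpansion_mul_sqrt_sum_sq_le (hμ : 1 < min α β) (hr : 0 ≤ r)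
    (hρ : min α β ≤ ρ) (hs : 7 * min α β * (N * r) < 3 * (min α β - 1))
    (ha0 : ρ - N * r ≤ |a 0|) (hx : x ∈ PsiSet (N + 1) α β r) :
    psiExpansion (min α β) (N * r) * Real.sqrt (∑ i, x i ^ 2) ≤
      Real.sqrt (∑ i, (bcMat (N + 1) a *ᵥ x) i ^ 2) := by
  rw [psiExpansion]
  set T := 1 + (min α β - 1) ^ 2 / (4 * (1 - (N * r) ^ 2))
  have hs0 : 0 ≤ N * r := by positivity
  have hs1 : N * r < 1 / 2 := by nlinarith
  have hT : 0 < T := by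
    have : 0 < 1 - (N * r) ^ 2 := by nlinarith
    positivity
  have hK : 0 ≤ 1 + (min α β - 1) / 2 - N * r := by linarith
  calc (1 + (min α β - 1) / 2 - N * r) / Real.sqrt T * Real.sqrt (∑ i, x i ^ 2)
      ≤ (1 + (min α β - 1) / 2 - N * r) / Real.sqrt T * Real.sqrt (T * x 0 ^ 2) := by
        gcongr
        exact sum_sq_le_of_mem_PsiSet hμ.le hr (by linarith) hx
    _ = (1 + (min α β - 1) / 2 - N * r) * |x 0| := by
        rw [Real.sqrt_mul hT.le, Real.sqrt_sq_eq_abs, ← mul_assoc,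
          div_mul_cancel₀ _ (Real.sqrt_pos.2 hT).ne']
    _ ≤ (ρ - N * r - (min α β - 1) / 2) * |x 0| :=
        mul_le_mul_of_nonneg_right (by linarith) (abs_nonneg _)
    _ ≤ |(bcMat (N + 1) a *ᵥ x) 0| := abs_bcMat_mulVec_zero_ge hμ.le hr ha0 hx
    _ ≤ Real.sqrt (∑ i, (bcMat (N + 1) a *ᵥ x) i ^ 2) := by
        rw [← Real.sqrt_sq_eq_abs]
        exact Real.sqrt_le_sqrt (single_le_sum (fun i _ => sq_nonneg _) (mem_univ _))

end ConeMap

open Matrix in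
/-- Under Assumption (A) and the three bounds on `r(n−1)`, the cone `Ψ` is
contracting-invariant and expanding (w.r.t. the Euclidean norm) for `{A_L, A_R}`. -/
theorem stmt_1 (n : ℕ) (hn : 2 ≤ n) (aL aR : Fin n → ℝ) (α β r : ℝ)
    (hA : assumptionA n aL aR α β r)
    (h1 : r * ((n : ℝ) - 1) < 3 / 7 * (1 - 1 / α))
    (h2 : r * ((n : ℝ) - 1) < 3 / 7 * (1 - 1 / β))
    (h3 : r * ((n : ℝ) - 1) < 1 / 10 * (1 / α + 1 / β - 1)) :
    (∀ v ∈ PsiSet n α β r,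
      (bcMat n aL).mulVec v ∈ interior (PsiSet n α β r) ∪ {0} ∧
      (bcMat n aR).mulVec v ∈ interior (PsiSet n α β r) ∪ {0}) ∧
    ∃ c : ℝ, 1 < c ∧ ∀ v ∈ PsiSet n α β r,
      c * Real.sqrt (∑ i : Fin n, v i ^ 2) ≤
        Real.sqrt (∑ i : Fin n, ((bcMat n aL).mulVec v) i ^ 2) ∧
      c * Real.sqrt (∑ i : Fin n, v i ^ 2) ≤
        Real.sqrt (∑ i : Fin n, ((bcMat n aR).mulVec v) i ^ 2) := by
  obtain ⟨hα, hβ, hr, -, hL, hR⟩ := hA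
  obtain ⟨N, rfl⟩ : ∃ N, n = N + 1 := ⟨n - 1, by omega⟩
  have hN : 0 < N := by omega
  have hs0 : 0 < N * r := by positivity
  rw [show r * (((N + 1 : ℕ) : ℝ) - 1) = N * r by push_cast; ring] at h1 h2 h3
  have hμ : 1 < min α β := lt_min hα hβ
  have hμ2 : min α β < 2 := min_lt_two_of_one_lt_inv_add_inv (by linarith)
  have hs : 7 * min α β * (N * r) < 3 * (min α β - 1) := seven_mul_min_mul_lt hα hβ h1 h2
  obtain ⟨hL0, hLj⟩ := abs_coeff_bounds_of_specA hL
  obtain ⟨hR0, hRj⟩ := abs_coeff_bounds_of_specA hR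
  rw [abs_of_pos (by linarith : 0 < α)] at hL0 hLj
  rw [abs_neg, abs_of_pos (by linarith : 0 < β)] at hR0 hRj
  refine ⟨fun x hx => ⟨?_, ?_⟩, psiExpansion (min α β) (N * r),
    one_lt_psiExpansion hμ hμ2 hs0.le hs, fun x hx => ⟨?_, ?_⟩⟩
  · exact bcMat_mulVec_mem_interior_PsiSet_union_zero hN hμ hr (min_le_left α β) hs hL0 hLj hx
  · exact bcMat_mulVec_mem_interior_PsiSet_union_zero hN hμ hr (min_le_right α β) hs hR0 hRj hx
  · exact psiExpansion_mul_sqrt_sum_sq_le hμ hr.le (min_le_left α β) hs hL0 hx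
  · exact psiExpansion_mul_sqrt_sum_sq_le hμ hr.le (min_le_right α β) hs hR0 hx
end

section
/- Suppose Assumption (A) holds, 0 < ε < 1, and r(n−1) ≤ ε. Then for every sign vector s ∈ {−1,+1}^{n−1}, |P^(s)_1 + 1/(α−1)| ≤ 2(2−ε)·r(n−1)/((α−1)(1−ε)²). -/
open Matrix Polynomial Finset

/-!
The row vector `u` is a left eigenvector of the companion matrix `A_L` for `α`: a left
`α`-eigenvector exists since `α` is a root of the characteristic polynomial, and the shift
structure of `A_L` forces it to be a multiple of `u`. Hence `uᵀY = uᵀb / (1 - α) = α^{n-1}/(1-α)`,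
and the equation of `E` reads `α^{n-1} (P₁ + 1/(α-1)) = -∑_{k ≥ 1} α^{n-1-k} P_{k+1}`.
Each `|P_{k+1}| = 2α/(α-1) · C(n-1,k) r^k ≤ 2α/(α-1) · (r(n-1))^k`, so the right side is
dominated by a geometric series in `r(n-1) ≤ ε < 1`.
-/

lemma specA.exists_eval_charpoly_eq_prod {n : ℕ} {M : Matrix (Fin n) (Fin n) ℝ} {ρ r : ℝ}
    (h : specA n M ρ r) :
    ∃ lam : Fin (n - 1) → ℂ, (∀ j, ‖lam j‖ ≤ r) ∧
      ∀ x : ℝ, ((M.charpoly.eval x : ℝ) : ℂ) = (x - ρ) * ∏ j, (x - lam j) := by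
  obtain ⟨lam, hlam, hfac⟩ := h
  refine ⟨lam, hlam, fun x => ?_⟩
  have h := congrArg (Polynomial.eval (algebraMap ℝ ℂ x)) hfac
  rw [Polynomial.eval_map, Polynomial.eval₂_at_apply] at h
  simpa [Polynomial.eval_prod] using h

lemma specA.eval_charpoly_self {n : ℕ} {M : Matrix (Fin n) (Fin n) ℝ} {ρ r : ℝ}
    (h : specA n M ρ r) : M.charpoly.eval ρ = 0 := by
  obtain ⟨lam, -, heval⟩ := h.exists_eval_charpoly_eq_prod
  simpa using heval ρ

lemma specA.eval_charpoly_ne_zero {n : ℕ} {M : Matrix (Fin n) (Fin n) ℝ} {ρ r x : ℝ}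
    (h : specA n M ρ r) (hxρ : x ≠ ρ) (hx : r < |x|) : M.charpoly.eval x ≠ 0 := by
  obtain ⟨lam, hlam, heval⟩ := h.exists_eval_charpoly_eq_prod
  have hfactor : ∀ j, (x : ℂ) - lam j ≠ 0 := fun j hj => by
    have := hlam j
    rw [← sub_eq_zero.mp hj, Complex.norm_real, Real.norm_eq_abs] at this
    linarith
  rw [← Complex.ofReal_ne_zero, heval]
  exact mul_ne_zero (sub_ne_zero.mpr (by exact_mod_cast hxρ))
    (Finset.prod_ne_zero_iff.mpr fun j _ => hfactor j)

lemma vecMul_bcMat_succ {m : ℕ} (a w : Fin (m + 1) → ℝ) (j : Fin m) :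
    (w ᵥ* bcMat (m + 1) a) j.succ = w j.castSucc := by
  rw [vecMul, dotProduct, Finset.sum_eq_single j.castSucc]
  · simp [bcMat]
  · intro i _ hi
    have h0 : ((j.succ : Fin (m + 1)) : ℕ) ≠ 0 := by simp
    have h1 : ((j.succ : Fin (m + 1)) : ℕ) ≠ (i : ℕ) + 1 := by
      intro h
      exact hi (Fin.ext (by simp at h ⊢; omega))
    simp only [bcMat, Matrix.of_apply, if_neg h0, if_neg h1]
    ring
  · simp

lemma eq_smul_uvec_of_vecMul_bcMat_eq_smul {m : ℕ} {a w : Fin (m + 1) → ℝ} {α : ℝ}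
    (hw : w ᵥ* bcMat (m + 1) a = α • w) : w = w (Fin.last m) • uvec (m + 1) α := by
  funext i
  induction i using Fin.reverseInduction with
  | last => simp [uvec]
  | cast i ih =>
    have h := congrFun hw i.succ
    rw [vecMul_bcMat_succ] at h
    simp only [Pi.smul_apply, smul_eq_mul, uvec, Fin.val_succ, Fin.val_castSucc] at h ih ⊢
    rw [h, ih, show m + 1 - 1 - i = m + 1 - 1 - (i + 1) + 1 by omega, pow_succ]
    ring

lemma uvec_vecMul_bcMat {m : ℕ} {a : Fin (m + 1) → ℝ} {α : ℝ}
    (h : (bcMat (m + 1) a).charpoly.eval α = 0) :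
    uvec (m + 1) α ᵥ* bcMat (m + 1) a = α • uvec (m + 1) α := by
  rw [Matrix.eval_charpoly] at h
  obtain ⟨w, hw0, hw⟩ := Matrix.exists_vecMul_eq_zero_iff.mpr h
  have hwA : w ᵥ* bcMat (m + 1) a = α • w := by
    rw [Matrix.vecMul_sub, sub_eq_zero] at hw
    rw [← hw]
    ext i
    simp [Matrix.vecMul_diagonal, mul_comm]
  have hw_eq := eq_smul_uvec_of_vecMul_bcMat_eq_smul hwA
  have hc : w (Fin.last m) ≠ 0 := fun hc => hw0 (by rw [hw_eq, hc, zero_smul])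
  rw [hw_eq, Matrix.smul_vecMul, smul_comm] at hwA
  exact smul_right_injective _ hc hwA

lemma dotProduct_inv_one_sub_mulVec {K ι : Type*} [Field K] [Fintype ι] [DecidableEq ι]
    {A : Matrix ι ι K} {u : ι → K} {α : K} (hu : u ᵥ* A = α • u) (hA : IsUnit (1 - A).det)
    (hα : α ≠ 1) (b : ι → K) :
    u ⬝ᵥ ((1 - A)⁻¹ *ᵥ b) = (1 - α)⁻¹ * (u ⬝ᵥ b) := by
  have hu' : u ᵥ* (1 - A) = (1 - α) • u := by
    rw [Matrix.vecMul_sub, Matrix.vecMul_one, hu, sub_smul, one_smul]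
  calc u ⬝ᵥ ((1 - A)⁻¹ *ᵥ b)
      = (1 - α)⁻¹ * ((1 - α) • u ⬝ᵥ ((1 - A)⁻¹ *ᵥ b)) := by
        rw [smul_dotProduct, smul_eq_mul, inv_mul_cancel_left₀ (sub_ne_zero.mpr hα.symm)]
    _ = (1 - α)⁻¹ * (u ⬝ᵥ b) := by
        rw [← hu', Matrix.dotProduct_mulVec, Matrix.vecMul_vecMul,
          Matrix.mul_nonsing_inv _ hA, Matrix.vecMul_one]

lemma uvec_dotProduct_Ypt {m : ℕ} {a : Fin (m + 1) → ℝ} {α r : ℝ}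
    (hspec : specA (m + 1) (bcMat (m + 1) a) α r) (hα : 1 < α) (hr : r < 1) :
    uvec (m + 1) α ⬝ᵥ Ypt (m + 1) a = α ^ m / (1 - α) := by
  have hdet : IsUnit (1 - bcMat (m + 1) a).det := by
    have h := hspec.eval_charpoly_ne_zero (x := 1) hα.ne (by rwa [abs_one])
    rw [Matrix.eval_charpoly, map_one] at h
    exact h.isUnit
  rw [Ypt, dotProduct_inv_one_sub_mulVec (uvec_vecMul_bcMat hspec.eval_charpoly_self) hdet
    hα.ne']
  simp [dotProduct, bcVec, uvec, div_eq_inv_mul]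

lemma pow_mul_first_add_inv_eq_of_mem_Eset {m : ℕ} {a P : Fin (m + 1) → ℝ} {α r : ℝ}
    (hspec : specA (m + 1) (bcMat (m + 1) a) α r) (hα : 1 < α) (hr : r < 1)
    (hP : P ∈ Eset (m + 1) a α) :
    α ^ m * (P 0 + 1 / (α - 1)) = -∑ j : Fin m, α ^ (m - (j + 1)) * P j.succ := by
  have hE : uvec (m + 1) α ⬝ᵥ P = uvec (m + 1) α ⬝ᵥ Ypt (m + 1) a := by
    rw [← sub_eq_zero, ← dotProduct_sub]
    exact hP
  rw [uvec_dotProduct_Ypt hspec hα hr, dotProduct, Fin.sum_univ_succ] at hE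
  simp only [uvec, Fin.val_zero, Fin.val_succ, Nat.add_sub_cancel, Nat.sub_zero] at hE
  rw [one_div, ← neg_sub, inv_neg]
  linear_combination hE

lemma abs_sum_pow_mul_vertex_le {m : ℕ} {a P : Fin (m + 1) → ℝ} {α r : ℝ}
    {s : Fin (m + 1 - 1) → ℝ} (hα : 1 < α) (hr : 0 ≤ r) (hs : ∀ j, s j = 1 ∨ s j = -1)
    (hP : isVertexP (m + 1) a α r s P) :
    |∑ j : Fin m, α ^ (m - (j + 1)) * P j.succ| ≤
      α ^ m * (2 / (α - 1) * ∑ j ∈ range m, (m.choose (j + 1) : ℝ) * r ^ (j + 1)) := by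
  rw [← Fin.sum_univ_eq_sum_range (fun j => (m.choose (j + 1) : ℝ) * r ^ (j + 1)),
    Finset.mul_sum, Finset.mul_sum]
  refine (Finset.abs_sum_le_sum_abs _ _).trans (Finset.sum_le_sum fun j _ => ?_)
  have hPj : |P j.succ| = 2 * α / (α - 1) * (m.choose (j + 1) * r ^ ((j : ℕ) + 1)) := by
    have habs : ∀ i, |s i| = 1 := fun i => by rcases hs i with h | h <;> simp [h]
    rw [hP.2 j.succ (by simp), abs_mul, habs, one_mul, abs_of_nonneg (by positivity)]
    simp [mul_assoc]
  have hpow : α ^ (m - (j + 1)) * α ≤ α ^ m := by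
    rw [← pow_succ]
    exact pow_le_pow_right₀ hα.le (by omega)
  rw [abs_mul, abs_of_pos (by positivity), hPj]
  calc α ^ (m - (j + 1)) * (2 * α / (α - 1) * (m.choose (j + 1) * r ^ ((j : ℕ) + 1)))
      = (α ^ (m - (j + 1)) * α) * (2 / (α - 1) * (m.choose (j + 1) * r ^ ((j : ℕ) + 1))) := by
        ring
    _ ≤ α ^ m * (2 / (α - 1) * (m.choose (j + 1) * r ^ ((j : ℕ) + 1))) :=
        mul_le_mul_of_nonneg_right hpow (by positivity)

lemma sum_range_choose_succ_mul_pow_le {m : ℕ} {r : ℝ} (hr : 0 ≤ r) (hrm : r * m < 1) :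
    ∑ j ∈ range m, (m.choose (j + 1) : ℝ) * r ^ (j + 1) ≤ r * m / (1 - r * m) := by
  calc ∑ j ∈ range m, (m.choose (j + 1) : ℝ) * r ^ (j + 1)
      ≤ ∑ j ∈ range m, (r * m) ^ (j + 1) := Finset.sum_le_sum fun j _ => by
        rw [mul_pow, mul_comm]
        gcongr
        exact_mod_cast Nat.choose_le_pow m (j + 1)
    _ = ∑ i ∈ Ico 1 (m + 1), (r * m) ^ i := by
        rw [Finset.sum_Ico_eq_sum_range, Nat.add_sub_cancel]
        simp only [add_comm]
    _ ≤ (r * m) ^ 1 / (1 - r * m) := geom_sum_Ico_le_of_lt_one (by positivity) hrm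
    _ = r * m / (1 - r * m) := by rw [pow_one]

/-- Under Assumption (A) (for `A_L`), `0 < ε < 1`, and `r(n−1) ≤ ε`, each vertex `P^(s)`
satisfies `|P^(s)_1 + 1/(α−1)| ≤ 2(2−ε) r(n−1)/((α−1)(1−ε)²)`. -/
theorem stmt_8 (n : ℕ) (hn : 2 ≤ n) (aL : Fin n → ℝ) (α r ε : ℝ)
    (hα : 1 < α) (hr0 : 0 < r) (hr1 : r < 1)
    (hspec : specA n (bcMat n aL) α r)
    (hε1 : ε < 1) (hrn : r * ((n : ℝ) - 1) ≤ ε)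
    (s : Fin (n - 1) → ℝ) (hs : ∀ j, s j = 1 ∨ s j = -1)
    (P : Fin n → ℝ) (hP : isVertexP n aL α r s P) :
    |P ⟨0, by omega⟩ + 1 / (α - 1)| ≤
      2 * (2 - ε) * (r * ((n : ℝ) - 1)) / ((α - 1) * (1 - ε) ^ 2) := by
  obtain ⟨m, rfl⟩ : ∃ m, n = m + 1 := ⟨n - 1, by omega⟩
  have hm : ((m + 1 : ℕ) : ℝ) - 1 = m := by push_cast; ring
  rw [hm] at hrn ⊢
  have hfirst : |P 0 + 1 / (α - 1)| ≤
      2 / (α - 1) * ∑ j ∈ range m, (m.choose (j + 1) : ℝ) * r ^ (j + 1) := by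
    have h := abs_sum_pow_mul_vertex_le hα hr0.le hs hP
    rw [← abs_neg, ← pow_mul_first_add_inv_eq_of_mem_Eset hspec hα hr1 hP.1, abs_mul,
      abs_of_pos (by positivity)] at h
    exact le_of_mul_le_mul_left h (by positivity)
  calc |P 0 + 1 / (α - 1)|
      ≤ 2 / (α - 1) * (r * m / (1 - r * m)) :=
        hfirst.trans (by gcongr; exact sum_range_choose_succ_mul_pow_le hr0.le (by linarith))
    _ ≤ 2 / (α - 1) * (r * m / (1 - ε)) := by gcongr
    _ = 2 * (1 - ε) * (r * m) / ((α - 1) * (1 - ε) ^ 2) := by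
        field_simp [show 1 - ε ≠ 0 by linarith]
    _ ≤ 2 * (2 - ε) * (r * m) / ((α - 1) * (1 - ε) ^ 2) := by gcongr; linarith
end

section
/- Suppose Assumption (A) holds, 0 < ε < 1/3, and r(n−1) ≤ ε. Then |C₁ − α/((α−1)β)| ≤ (2α + 2 + ε)·r(n−1)/((1−3ε)(α−1)β). -/
open Matrix Polynomial Finset

/-!
The vector `u = (x^{n-1}, …, x, 1)` satisfies `uᵀ (x I - A) = p(x) e₁ᵀ` with
`p(x) = xⁿ + Σ aᵢ x^{n-1-i}`, so `p` is the characteristic polynomial of `A`. Evaluating `p_L` at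
`1` (giving `Δ`) and at its root `α` collapses the numerator of `C₁` to `α / (α - 1)`, hence
`C₁ = α / ((α - 1) D)` with `D = Σ aᴿᵢ α^{-i} = α^{1-n} p_R(α) - α`. Factoring
`p_R(α) = (α + β) ∏ (α - λⱼ)` gives `D - β = (α + β) (∏ (1 - λⱼ/α) - 1)`, and
`‖∏ (1 + zⱼ) - 1‖ ≤ exp (Σ ‖zⱼ‖) - 1` bounds `|D - β|` by `(α + β) ρ / (α - ρ)` with
`ρ = r (n - 1)`. The claimed estimate is then elementary.
-/

namespace BorderCollision

lemma sum_uvec_smul_row_scalar_sub_bcMat (n : ℕ) (a : Fin (n + 1) → ℝ) (x : ℝ) :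
    ∑ k, uvec (n + 1) x k • (scalar (Fin (n + 1)) x - bcMat (n + 1) a) k =
      Pi.single 0 (x ^ (n + 1) + ∑ i, a i * x ^ (n - i)) := by
  ext j
  simp only [Finset.sum_apply, Pi.smul_apply, smul_eq_mul, Matrix.sub_apply, scalar_apply,
    diagonal_apply, bcMat, of_apply, uvec, add_tsub_cancel_right, mul_sub, mul_add,
    Finset.sum_sub_distrib, Finset.sum_add_distrib, mul_ite, mul_zero]
  cases j using Fin.cases with
  | zero => simp [pow_succ, mul_comm]
  | succ j =>
    have hj : n - j = n - (j + 1) + 1 := by omega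
    have hcast (i : Fin (n + 1)) : (j : ℕ) = i ↔ j.castSucc = i := by simp [Fin.ext_iff]
    simp [← pow_succ, ← hj, hcast]

lemma det_scalar_sub_bcMat_succ (n : ℕ) (a : Fin (n + 1) → ℝ) (x : ℝ) :
    (scalar (Fin (n + 1)) x - bcMat (n + 1) a).det = x ^ (n + 1) + ∑ i, a i * x ^ (n - i) := by
  set M := scalar (Fin (n + 1)) x - bcMat (n + 1) a
  have hrow := det_updateRow_sum M (Fin.last n) (uvec (n + 1) x)
  rw [sum_uvec_smul_row_scalar_sub_bcMat] at hrow
  simp only [uvec, add_tsub_cancel_right, Fin.val_last, tsub_self, pow_zero, one_smul] at hrow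
  set p := x ^ (n + 1) + ∑ i, a i * x ^ (n - i)
  rw [← hrow, det_succ_row _ (Fin.last n), Fintype.sum_eq_single 0]
  · have hminor : (M.updateRow (Fin.last n) (Pi.single 0 p)).submatrix (Fin.last n).succAbove
        (Fin.succAbove 0) = M.submatrix Fin.castSucc Fin.succ := by
      ext i j; simp [updateRow_apply, Fin.castSucc_ne_last]
    have htri : (M.submatrix Fin.castSucc Fin.succ).IsLowerTriangular := by
      intro i j hij
      have hij' : (i : ℕ) < j := hij
      simp only [M, submatrix_apply, Matrix.sub_apply, scalar_apply, bcMat, of_apply]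
      rw [diagonal_apply_ne _ (by simp [Fin.ext_iff]; omega)]
      simp [hij'.ne']
    rw [hminor, det_of_isLowerTriangular _ htri]
    have hdiag (i : Fin n) : diagonal (fun _ => x) i.castSucc i.succ = 0 :=
      diagonal_apply_ne _ Fin.castSucc_lt_succ.ne
    simp [M, bcMat, hdiag, mul_right_comm _ _ ((-1 : ℝ) ^ n), ← pow_add]
  · intro j hj
    simp [hj]

lemma eval_charpoly_bcMat (n : ℕ) (a : Fin n → ℝ) (x : ℝ) :
    (bcMat n a).charpoly.eval x = x ^ n + ∑ i, a i * x ^ (n - 1 - i) := by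
  cases n with
  | zero => simp
  | succ n => rw [eval_charpoly, det_scalar_sub_bcMat_succ, add_tsub_cancel_right]

lemma det_one_sub_bcMat (n : ℕ) (a : Fin n → ℝ) : (1 - bcMat n a).det = 1 + ∑ i, a i := by
  simpa [eval_charpoly] using eval_charpoly_bcMat n a 1

lemma sub_one_mul_sum_Icc_inv_pow {α : ℝ} (hα : α ≠ 0) (j : ℕ) :
    (α - 1) * ∑ k ∈ Icc 1 j, α⁻¹ ^ k = 1 - α⁻¹ ^ j := by
  rw [← Ico_add_one_right_eq_Icc, sum_Ico_eq_sum_range, Nat.add_sub_cancel, ← mul_neg_geom_sum]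
  simp only [pow_add, pow_one, ← mul_sum, ← mul_assoc, sub_mul, mul_inv_cancel₀ hα, one_mul]

lemma sub_one_mul_sum_inv_pow_mul_sum_tail {n : ℕ} {α : ℝ} (hα : α ≠ 0) (a : Fin n → ℝ) :
    (α - 1) * ∑ k ∈ univ.filter (fun k : Fin n => 1 ≤ (k : ℕ)),
        α⁻¹ ^ (k : ℕ) * ∑ j ∈ univ.filter (fun j : Fin n => (k : ℕ) ≤ (j : ℕ)), a j =
      ∑ j, a j - ∑ j, a j * α⁻¹ ^ (j : ℕ) := by
  have hIcc (j : Fin n) : ∑ k ∈ univ.filter (fun k : Fin n => 1 ≤ (k : ℕ) ∧ (k : ℕ) ≤ j),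
      α⁻¹ ^ (k : ℕ) = ∑ k ∈ Icc 1 (j : ℕ), α⁻¹ ^ k := by
    rw [sum_filter, Fin.sum_univ_eq_sum_range (fun k => if 1 ≤ k ∧ k ≤ (j : ℕ) then α⁻¹ ^ k else 0),
      ← sum_filter]
    congr 1
    ext k
    simp only [mem_filter, mem_range, mem_Icc]
    omega
  have hswap : ∑ k ∈ univ.filter (fun k : Fin n => 1 ≤ (k : ℕ)),
        α⁻¹ ^ (k : ℕ) * ∑ j ∈ univ.filter (fun j : Fin n => (k : ℕ) ≤ (j : ℕ)), a j =
      ∑ j, a j * ∑ k ∈ Icc 1 (j : ℕ), α⁻¹ ^ k := by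
    conv_lhs => simp only [mul_sum]
    rw [sum_comm' (t' := univ)
      (s' := fun j : Fin n => univ.filter (fun k : Fin n => 1 ≤ (k : ℕ) ∧ (k : ℕ) ≤ j))
      (by intro k j; simp only [mem_filter, mem_univ, true_and, and_true])]
    refine sum_congr rfl fun j _ => ?_
    rw [← sum_mul, hIcc, mul_comm]
  rw [hswap, mul_sum, ← sum_sub_distrib]
  refine sum_congr rfl fun j _ => ?_
  rw [mul_left_comm, sub_one_mul_sum_Icc_inv_pow hα]
  ring

lemma sum_mul_inv_pow_eq {n : ℕ} (hn : 1 ≤ n) (a : Fin n → ℝ) {x : ℝ} (hx : x ≠ 0) :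
    ∑ i, a i * x⁻¹ ^ (i : ℕ) = (x ^ n + ∑ i, a i * x ^ (n - 1 - i)) * x⁻¹ ^ (n - 1) - x := by
  have hpow {m k : ℕ} (hkm : k ≤ m) : x ^ (m - k) * x⁻¹ ^ m = x⁻¹ ^ k := by
    obtain ⟨d, rfl⟩ := Nat.exists_eq_add_of_le hkm
    rw [Nat.add_sub_cancel_left, pow_add, mul_left_comm, ← mul_pow, mul_inv_cancel₀ hx, one_pow,
      mul_one]
  have hlead : x ^ n * x⁻¹ ^ (n - 1) = x := by
    rw [show x ^ n = x * x ^ (n - 1) by rw [← pow_succ']; congr; omega, mul_assoc, ← mul_pow,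
      mul_inv_cancel₀ hx, one_pow, mul_one]
  rw [add_mul, hlead, sum_mul, add_sub_cancel_left]
  exact sum_congr rfl fun i _ => by rw [mul_assoc, hpow (by omega)]

lemma Cfirst_eq {n : ℕ} (hn : 1 ≤ n) (aL aR : Fin n → ℝ) {α : ℝ} (hα0 : α ≠ 0) (hα1 : α ≠ 1)
    (hroot : (bcMat n aL).charpoly.eval α = 0) (hΔ : (1 - bcMat n aL).det ≠ 0) :
    Cfirst n aL aR α = α / ((α - 1) * ∑ i, aR i * α⁻¹ ^ (i : ℕ)) := by
  have hT := sub_one_mul_sum_inv_pow_mul_sum_tail hα0 aL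
  have hL := sum_mul_inv_pow_eq hn aL hα0
  rw [← eval_charpoly_bcMat, hroot, zero_mul, zero_sub] at hL
  have hnum : 1 - 1 / (1 - bcMat n aL).det + 1 / (1 - bcMat n aL).det *
      ∑ k ∈ univ.filter (fun k : Fin n => 1 ≤ (k : ℕ)),
        α⁻¹ ^ (k : ℕ) * ∑ j ∈ univ.filter (fun j : Fin n => (k : ℕ) ≤ (j : ℕ)), aL j =
      α / (α - 1) := by
    rw [det_one_sub_bcMat] at hΔ ⊢
    generalize ∑ k ∈ univ.filter (fun k : Fin n => 1 ≤ (k : ℕ)),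
      α⁻¹ ^ (k : ℕ) * ∑ j ∈ univ.filter (fun j : Fin n => (k : ℕ) ≤ (j : ℕ)), aL j = T at hT ⊢
    rw [hL] at hT
    rw [eq_div_iff (sub_ne_zero.mpr hα1)]
    field_simp
    linear_combination hT
  simp only [Cfirst, _root_.zpow_neg, zpow_natCast, ← inv_pow, hnum, div_div, mul_comm _ (aR _)]

section Spectrum

variable {n : ℕ} {M : Matrix (Fin n) (Fin n) ℝ} {ρ : ℝ} {lam : Fin (n - 1) → ℂ}

lemma ofReal_eval_charpoly_eq_prod
    (h : M.charpoly.map (algebraMap ℝ ℂ) = (X - C (ρ : ℂ)) * ∏ j, (X - C (lam j))) (x : ℝ) :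
    ((M.charpoly.eval x : ℝ) : ℂ) = (x - ρ) * ∏ j, (x - lam j) := by
  have := congrArg (eval (algebraMap ℝ ℂ x)) h
  rw [eval_map_apply] at this
  simpa [eval_prod] using this

lemma eval_charpoly_eq_zero_of_map_eq
    (h : M.charpoly.map (algebraMap ℝ ℂ) = (X - C (ρ : ℂ)) * ∏ j, (X - C (lam j))) :
    M.charpoly.eval ρ = 0 := by
  simpa using ofReal_eval_charpoly_eq_prod h ρ

lemma eval_charpoly_ne_zero_of_map_eq
    (h : M.charpoly.map (algebraMap ℝ ℂ) = (X - C (ρ : ℂ)) * ∏ j, (X - C (lam j))) {r : ℝ}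
    (hlam : ∀ j, ‖lam j‖ ≤ r) {x : ℝ} (hxρ : x ≠ ρ) (hx : r < |x|) :
    M.charpoly.eval x ≠ 0 := by
  intro h0
  have hprod := ofReal_eval_charpoly_eq_prod h x
  rw [h0, Complex.ofReal_zero, eq_comm, mul_eq_zero, sub_eq_zero, Complex.ofReal_inj,
    prod_eq_zero_iff] at hprod
  obtain hxρ' | ⟨j, -, hj⟩ := hprod
  · exact hxρ hxρ'
  · have := hlam j
    rw [← sub_eq_zero.mp hj, Complex.norm_real, Real.norm_eq_abs] at this
    linarith

end Spectrum

lemma norm_prod_one_add_sub_one_mul_le {ι R : Type*} [NormedCommRing R] [NormOneClass R]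
    (s : Finset ι) (f : ι → R) {σ : ℝ} (hf : ∑ i ∈ s, ‖f i‖ ≤ σ) (hσ : σ ≤ 1) :
    ‖∏ i ∈ s, (1 + f i) - 1‖ * (1 - σ) ≤ σ := by
  have hexp : Real.exp σ * (1 - σ) ≤ 1 := by
    calc Real.exp σ * (1 - σ) ≤ Real.exp σ * Real.exp (-σ) :=
          mul_le_mul_of_nonneg_left (Real.one_sub_le_exp_neg σ) (Real.exp_pos σ).le
      _ = 1 := by rw [← Real.exp_add, add_neg_cancel, Real.exp_zero]
  calc ‖∏ i ∈ s, (1 + f i) - 1‖ * (1 - σ) ≤ (Real.exp σ - 1) * (1 - σ) := by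
        gcongr
        exact (s.norm_prod_one_add_sub_one_le f).trans (by gcongr)
    _ ≤ σ := by linarith

lemma abs_sum_mul_inv_pow_sub_le {n : ℕ} (hn : 1 ≤ n) (a : Fin n → ℝ) {α β r : ℝ}
    (hspec : specA n (bcMat n a) (-β) r) (hα : 0 < α) (hβ : 0 ≤ β)
    (hrα : r * ((n : ℝ) - 1) ≤ α) :
    |∑ i, a i * α⁻¹ ^ (i : ℕ) - β| * (α - r * ((n : ℝ) - 1)) ≤ (α + β) * (r * ((n : ℝ) - 1)) := by
  obtain ⟨lam, hlam, hfac⟩ := hspec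
  have hcast : ((n - 1 : ℕ) : ℝ) = (n : ℝ) - 1 := by rw [Nat.cast_sub hn, Nat.cast_one]
  set P : ℂ := ∏ j, (1 + -(lam j / α))
  have hP : ((∑ i, a i * α⁻¹ ^ (i : ℕ) - β : ℝ) : ℂ) = (α + β) * (P - 1) := by
    have hscale : (∏ j, ((α : ℂ) - lam j)) * (α : ℂ)⁻¹ ^ (n - 1) = P := by
      have hα' : (α : ℂ) ≠ 0 := by exact_mod_cast hα.ne'
      have hcard := prod_mul_pow_card (s := univ) (f := fun j => (α : ℂ) - lam j) (b := (α : ℂ)⁻¹)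
      rw [card_univ, Fintype.card_fin] at hcard
      rw [hcard]
      refine prod_congr rfl fun j _ => ?_
      field_simp
      ring
    rw [sum_mul_inv_pow_eq hn a hα.ne', ← eval_charpoly_bcMat]
    push_cast
    rw [ofReal_eval_charpoly_eq_prod hfac α, Complex.ofReal_neg]
    linear_combination (α + β : ℂ) * hscale
  have hnorm : |∑ i, a i * α⁻¹ ^ (i : ℕ) - β| = (α + β) * ‖P - 1‖ := by
    rw [← Real.norm_eq_abs, ← Complex.norm_real, hP, norm_mul, ← Complex.ofReal_add,
      Complex.norm_real, Real.norm_of_nonneg (by positivity)]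
  have hσ : ∑ j, ‖-(lam j / α)‖ ≤ r * ((n : ℝ) - 1) / α := by
    calc ∑ j, ‖-(lam j / α)‖ ≤ ∑ _j : Fin (n - 1), r / α := by
          refine sum_le_sum fun j _ => ?_
          rw [norm_neg, norm_div, Complex.norm_real, Real.norm_of_nonneg hα.le]
          gcongr
          exact hlam j
      _ = r * ((n : ℝ) - 1) / α := by
          rw [sum_const, card_univ, Fintype.card_fin, nsmul_eq_mul, hcast]
          ring
  have key := norm_prod_one_add_sub_one_mul_le univ _ hσ ((div_le_one hα).2 hrα)
  have hscaled : ‖P - 1‖ * (α - r * ((n : ℝ) - 1)) ≤ r * ((n : ℝ) - 1) := by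
    calc ‖P - 1‖ * (α - r * ((n : ℝ) - 1))
        = α * (‖P - 1‖ * (1 - r * ((n : ℝ) - 1) / α)) := by field_simp
      _ ≤ α * (r * ((n : ℝ) - 1) / α) := by gcongr
      _ = r * ((n : ℝ) - 1) := by field_simp
  rw [hnorm, mul_assoc]
  exact mul_le_mul_of_nonneg_left hscaled (by positivity)

lemma abs_div_sub_div_le_of_abs_sub_le {α β D ρ ε : ℝ} (hα : 1 < α) (hβ : 1 < β)
    (hε : ε < 1 / 3) (hρ : 0 ≤ ρ) (hρε : ρ ≤ ε) (hD : |D - β| * (α - ρ) ≤ (α + β) * ρ) :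
    |α / ((α - 1) * D) - α / ((α - 1) * β)| ≤
      (2 * α + 2 + ε) * ρ / ((1 - 3 * ε) * (α - 1) * β) := by
  set δ := |D - β| with hδ
  have hδ0 : 0 ≤ δ := abs_nonneg _
  have hε1 : 0 < 1 - ε := by linarith
  have hε3 : 0 < 1 - 3 * ε := by linarith
  have hαδ : δ * (α * (1 - ε)) ≤ (α + β) * ρ :=
    le_trans (mul_le_mul_of_nonneg_left (by nlinarith) hδ0) hD
  have hδε : δ * (1 - ε) ≤ 2 * β * ε := by
    have hαβ : α + β ≤ 2 * α * β := by nlinarith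
    refine le_of_mul_le_mul_left ?_ (by linarith : 0 < α)
    nlinarith [mul_le_mul_of_nonneg_right hαβ hρ]
  have hDlow : β * (1 - 3 * ε) ≤ D * (1 - ε) := by
    nlinarith [neg_abs_le (D - β)]
  have hDpos : 0 < D := by nlinarith
  have hkey : α * δ * (1 - 3 * ε) ≤ (2 * α + 2 + ε) * ρ * D := by
    refine le_of_mul_le_mul_right ?_ hε1
    calc α * δ * (1 - 3 * ε) * (1 - ε) ≤ (α + β) * ρ * (1 - 3 * ε) := by nlinarith
      _ ≤ (2 * α + 2 + ε) * β * ρ * (1 - 3 * ε) := by gcongr; nlinarith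
      _ ≤ (2 * α + 2 + ε) * ρ * D * (1 - ε) := by
          have hc : 0 ≤ (2 * α + 2 + ε) * ρ := mul_nonneg (by linarith) hρ
          nlinarith [mul_le_mul_of_nonneg_left hDlow hc]
  have hdiff : α / ((α - 1) * D) - α / ((α - 1) * β) = α * (β - D) / ((α - 1) * D * β) := by
    field_simp
  rw [hdiff, abs_div, abs_mul, abs_sub_comm, ← hδ, abs_of_pos (by linarith : 0 < α),
    abs_of_pos (by positivity : 0 < (α - 1) * D * β),
    div_le_div_iff₀ (by positivity) (by positivity)]
  calc α * δ * ((1 - 3 * ε) * (α - 1) * β) = α * δ * (1 - 3 * ε) * ((α - 1) * β) := by ring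
    _ ≤ (2 * α + 2 + ε) * ρ * D * ((α - 1) * β) := by gcongr
    _ = (2 * α + 2 + ε) * ρ * ((α - 1) * D * β) := by ring

end BorderCollision

open BorderCollision in
theorem stmt_10_general (n : ℕ) (hn : 2 ≤ n) (aL aR : Fin n → ℝ) (α β r ε : ℝ)
    (hA : assumptionA n aL aR α β r)
    (hε1 : ε < 1 / 3) (hrn : r * ((n : ℝ) - 1) ≤ ε) :
    |Cfirst n aL aR α - α / ((α - 1) * β)| ≤
      (2 * α + 2 + ε) * (r * ((n : ℝ) - 1)) / ((1 - 3 * ε) * (α - 1) * β) := by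
  obtain ⟨hα, hβ, hr, hr1, ⟨lamL, hlamL, hfacL⟩, hspecR⟩ := hA
  have hn1 : 1 ≤ n := by omega
  have hα0 : 0 < α := by linarith
  have hρ : 0 ≤ r * ((n : ℝ) - 1) :=
    mul_nonneg hr.le (sub_nonneg.mpr (by exact_mod_cast hn1))
  have hΔ : (1 - bcMat n aL).det ≠ 0 := by
    simpa [eval_charpoly] using
      eval_charpoly_ne_zero_of_map_eq hfacL hlamL (x := 1) hα.ne (by rwa [abs_one])
  rw [Cfirst_eq hn1 aL aR hα0.ne' hα.ne' (eval_charpoly_eq_zero_of_map_eq hfacL) hΔ]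
  exact abs_div_sub_div_le_of_abs_sub_le hα hβ hε1 hρ hrn
    (abs_sum_mul_inv_pow_sub_le hn1 aR hspecR hα0 (by linarith) (by linarith))

/-- Under Assumption (A), `0 < ε < 1/3`, and `r(n−1) ≤ ε`, one has
`|C₁ − α/((α−1)β)| ≤ (2α + 2 + ε) r(n−1)/((1−3ε)(α−1)β)`. -/
theorem stmt_10 (n : ℕ) (hn : 2 ≤ n) (aL aR : Fin n → ℝ) (α β r ε : ℝ)
    (hA : assumptionA n aL aR α β r)
    (hε0 : 0 < ε) (hε1 : ε < 1 / 3) (hrn : r * ((n : ℝ) - 1) ≤ ε) :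
    |Cfirst n aL aR α - α / ((α - 1) * β)| ≤
      (2 * α + 2 + ε) * (r * ((n : ℝ) - 1)) / ((1 - 3 * ε) * (α - 1) * β) :=
  stmt_10_general n hn aL aR α β r ε hA hε1 hrn
end
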